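/- Let S be a digraph on m nodes with directed cycles C_1,...,C_k and node-cycle incidence vectors z_1,...,z_k ∈ ℕ^m. If y ∈ ℕ^m lies in the convex cone generated by z_1,...,z_k (with nonnegative real coefficients), then there exist nonnegative integers c_1,...,c_k with y = Σ_{j=1}^k c_j z_j. -/

import Mathlib

/-- `l` is the vertex list of a directed cycle of the digraph `E`. -/
def IsDiCycle {V : Type*} (E : V → V → Prop) (l : List V) : Prop :=
  l ≠ [] ∧ l.Nodup ∧
    ∀ i : Fin l.length,
      E (l.get i) (l.get ⟨(i.1 + 1) % l.length, Nat.mod_lt _ i.pos⟩)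


lemma count_eq_sum {V : Type*} [DecidableEq V] (l : List V) (v : V) :
    l.count v = (l.map fun x => if x = v then (1:ℕ) else 0).sum := by
  induction l with
  | nil => simp
  | cons a l ih =>
    rw [List.count_cons, ih]
    simp only [List.map_cons, List.sum_cons]
    by_cases h : a = v <;> simp [h] <;> omega

lemma fin_add_one_val {n : ℕ} [NeZero n] (i : Fin n) :
    ((i + 1 : Fin n)).val = (i.val + 1) % n := by
  simp only [Fin.add_def, Fin.val_one', Fin.val_mk]
  conv_rhs => rw [Nat.add_mod]
  rw [Nat.mod_eq_of_lt i.isLt]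

lemma walk_decomp {V : Type*} [DecidableEq V] (E' : V → V → Prop) :
    ∀ n : ℕ, ∀ f : Fin n → V, ∀ hn : 0 < n,
    (∀ i : Fin n, E' (f i) (f ⟨(i.1 + 1) % n, Nat.mod_lt _ hn⟩)) →
    ∃ cycs : List (List V), (∀ l ∈ cycs, IsDiCycle E' l) ∧
      ∀ v, (∑ i : Fin n, if f i = v then 1 else 0) = (cycs.map (fun l => l.count v)).sum := by
  intro n
  induction n using Nat.strong_induction_on with
  | _ n IH =>
  intro f hn hstep
  have fcongr : ∀ (x y : Fin n), x.val = y.val → f x = f y := fun x y h =>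
    congrArg f (Fin.ext h)
  by_cases hinj : Function.Injective f
  · refine ⟨[List.ofFn f], ?_, ?_⟩
    · intro l hl
      rw [List.mem_singleton] at hl
      subst hl
      have hlen : (List.ofFn f).length = n := List.length_ofFn
      refine ⟨?_, List.nodup_ofFn.mpr hinj, ?_⟩
      · intro h
        rw [h] at hlen
        simp at hlen
        omega
      · intro i
        rw [List.get_ofFn, List.get_ofFn]
        convert hstep (Fin.cast hlen i) using 2
        apply Fin.ext
        simp [hlen]
    · intro v
      simp only [List.map_cons, List.map_nil, List.sum_cons, List.sum_nil, add_zero]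
      rw [count_eq_sum, List.map_ofFn, List.sum_ofFn]
      rfl
  · rw [Function.not_injective_iff] at hinj
    obtain ⟨j1, j2, hfe, hne⟩ := hinj
    obtain ⟨i1, i2, hlt, hfeq⟩ : ∃ i1 i2 : Fin n, i1 < i2 ∧ f i1 = f i2 := by
      rcases lt_or_gt_of_ne hne with h | h
      · exact ⟨j1, j2, h, hfe⟩
      · exact ⟨j2, j1, h, hfe.symm⟩
    set a := i1.val with ha
    set b := i2.val with hb
    have hab : a < b := hlt
    have hbn : b < n := i2.isLt
    have hfab : ∀ (h1 : a < n) (h2 : b < n), f ⟨a, h1⟩ = f ⟨b, h2⟩ := by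
      intro h1 h2
      rw [fcongr ⟨a, h1⟩ i1 rfl, fcongr ⟨b, h2⟩ i2 rfl]
      exact hfeq
    set n1 := b - a with hn1
    set n2 := n - (b - a) with hn2
    have h1 : 0 < n1 := by omega
    have h1n : n1 < n := by omega
    have h2 : 0 < n2 := by omega
    have h2n : n2 < n := by omega
    set g1 : Fin n1 → V := fun j => f ⟨a + j.val, by omega⟩ with hg1
    set g2 : Fin n2 → V := fun j => f ⟨(b + j.val) % n, Nat.mod_lt _ hn⟩ with hg2
    have hmod : ∀ j : Fin n2, ((b + j.val) % n = b + j.val ∧ b + j.val < n) ∨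
        ((b + j.val) % n + n = b + j.val ∧ n ≤ b + j.val ∧ (b + j.val) % n < a) := by
      intro j
      have hj2 := j.isLt
      rcases lt_or_ge (b + j.val) n with h | h
      · left; exact ⟨Nat.mod_eq_of_lt h, h⟩
      · right
        have he : (b + j.val) % n = b + j.val - n := by
          rw [Nat.mod_eq_sub_mod h, Nat.mod_eq_of_lt (by omega)]
        omega
    have hstep1 : ∀ j : Fin n1, E' (g1 j) (g1 ⟨(j.1 + 1) % n1, Nat.mod_lt _ h1⟩) := by
      intro j
      have hj := j.isLt
      have base := hstep ⟨a + j.1, by omega⟩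
      have e2 : f ⟨(a + j.1 + 1) % n, Nat.mod_lt _ hn⟩
          = g1 ⟨(j.1 + 1) % n1, Nat.mod_lt _ h1⟩ := by
        show f _ = f _
        rcases lt_or_ge (j.1 + 1) n1 with h | h
        · apply fcongr
          show (a + j.1 + 1) % n = a + (j.1 + 1) % n1
          rw [Nat.mod_eq_of_lt h, Nat.mod_eq_of_lt (by omega)]
          omega
        · have hj1 : j.1 + 1 = n1 := by omega
          have l1 : (a + j.1 + 1) % n = b := by
            rw [Nat.mod_eq_of_lt (by omega)]; omega
          have l2 : a + (j.1 + 1) % n1 = a := by rw [hj1, Nat.mod_self]; omega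
          refine (fcongr _ ⟨b, by omega⟩ l1).trans ?_
          refine ((hfab (by omega) (by omega)).symm).trans ?_
          exact fcongr ⟨a, by omega⟩ _ l2.symm
      rw [← e2]
      exact base
    have hstep2 : ∀ j : Fin n2, E' (g2 j) (g2 ⟨(j.1 + 1) % n2, Nat.mod_lt _ h2⟩) := by
      intro j
      have hj := j.isLt
      have base := hstep ⟨(b + j.1) % n, Nat.mod_lt _ hn⟩
      have e2 : f ⟨((b + j.1) % n + 1) % n, Nat.mod_lt _ hn⟩
          = g2 ⟨(j.1 + 1) % n2, Nat.mod_lt _ h2⟩ := by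
        show f _ = f _
        rcases lt_or_ge (j.1 + 1) n2 with h | h
        · apply fcongr
          show ((b + j.1) % n + 1) % n = (b + (j.1 + 1) % n2) % n
          rw [Nat.mod_add_mod, Nat.mod_eq_of_lt h, ← Nat.add_assoc]
        · have hj1 : j.1 + 1 = n2 := by omega
          have l1 : ((b + j.1) % n + 1) % n = a := by
            rw [Nat.mod_add_mod]
            have : b + j.1 + 1 = n + a := by omega
            rw [this, Nat.add_mod_left, Nat.mod_eq_of_lt (by omega)]
          have l2 : (b + (j.1 + 1) % n2) % n = b := by
            rw [hj1, Nat.mod_self, Nat.add_zero, Nat.mod_eq_of_lt hbn]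
          refine (fcongr _ ⟨a, by omega⟩ l1).trans ?_
          refine (hfab (by omega) (by omega)).trans ?_
          exact fcongr ⟨b, by omega⟩ _ l2.symm
      rw [← e2]
      exact base
    obtain ⟨cycs1, hcyc1, hcount1⟩ := IH n1 h1n g1 h1 hstep1
    obtain ⟨cycs2, hcyc2, hcount2⟩ := IH n2 h2n g2 h2 hstep2
    refine ⟨cycs1 ++ cycs2, ?_, ?_⟩
    · intro l hl
      rcases List.mem_append.mp hl with h | h
      · exact hcyc1 l h
      · exact hcyc2 l h
    · intro v
      have key : (∑ i : Fin n, if f i = v then (1:ℕ) else 0)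
          = (∑ j : Fin n1, if g1 j = v then (1:ℕ) else 0)
            + (∑ j : Fin n2, if g2 j = v then (1:ℕ) else 0) := by
        set e : Fin n1 ⊕ Fin n2 → Fin n :=
          Sum.elim (fun j => ⟨a + j.val, by omega⟩)
            (fun j => ⟨(b + j.val) % n, Nat.mod_lt _ hn⟩) with he
        have hbij : Function.Bijective e := by
          constructor
          · rintro (x | x) (z | z) hxz <;>
              simp only [he, Sum.elim_inl, Sum.elim_inr, Fin.mk.injEq] at hxz
            · have hx := x.isLt; have hz := z.isLt
              congr 1; apply Fin.ext; omega
            · exfalso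
              have hx := x.isLt
              rcases hmod z with ⟨h1', h2'⟩ | ⟨h1', h2', h3'⟩ <;> omega
            · exfalso
              have hz := z.isLt
              rcases hmod x with ⟨h1', h2'⟩ | ⟨h1', h2', h3'⟩ <;> omega
            · have hx := x.isLt; have hz := z.isLt
              congr 1; apply Fin.ext
              rcases hmod x with ⟨h1', h2'⟩ | ⟨h1', h2', h3'⟩ <;>
                rcases hmod z with ⟨g1', g2'⟩ | ⟨g1', g2', g3'⟩ <;> omega
          · intro i
            have hi := i.isLt
            rcases lt_or_ge i.val a with hia | hia
            · refine ⟨Sum.inr ⟨i.val + n - b, by omega⟩, ?_⟩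
              simp only [he, Sum.elim_inr]
              apply Fin.ext
              show (b + (i.val + n - b)) % n = i.val
              have hx : b + (i.val + n - b) = i.val + n := by omega
              rw [hx, Nat.add_mod_right, Nat.mod_eq_of_lt hi]
            · rcases lt_or_ge i.val b with hib | hib
              · refine ⟨Sum.inl ⟨i.val - a, by omega⟩, ?_⟩
                simp only [he, Sum.elim_inl]
                apply Fin.ext
                show a + (i.val - a) = i.val
                omega
              · refine ⟨Sum.inr ⟨i.val - b, by omega⟩, ?_⟩
                simp only [he, Sum.elim_inr]
                apply Fin.ext
                show (b + (i.val - b)) % n = i.val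
                have hx : b + (i.val - b) = i.val := by omega
                rw [hx, Nat.mod_eq_of_lt hi]
        have hsum := Equiv.sum_comp (Equiv.ofBijective e hbij)
          (fun i => if f i = v then (1:ℕ) else 0)
        rw [← hsum, Fintype.sum_sum_type]
        rfl
      rw [key, hcount1 v, hcount2 v, List.map_append, List.sum_append]

lemma perm_decomp {T : Type*} [Fintype T] [DecidableEq T] {V : Type*} [DecidableEq V]
    (E' : V → V → Prop) (σ : Equiv.Perm T) (p : T → V)
    (hstep : ∀ t, E' (p t) (p (σ t))) :
    ∀ N : ℕ, ∀ s : Finset T, s.card ≤ N → (∀ t ∈ s, σ t ∈ s) →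
    ∃ cycs : List (List V), (∀ l ∈ cycs, IsDiCycle E' l) ∧
      ∀ v, (∑ t ∈ s, if p t = v then 1 else 0) = (cycs.map (fun l => l.count v)).sum := by
  intro N
  induction N with
  | zero =>
    intro s hcard _
    have hs : s = ∅ := Finset.card_eq_zero.mp (Nat.le_zero.mp hcard)
    subst hs
    exact ⟨[], by simp, by simp⟩
  | succ N IHN =>
    intro s hcard hinv
    rcases s.eq_empty_or_nonempty with rfl | ⟨t0, ht0⟩
    · exact ⟨[], by simp, by simp⟩
    have hex : ∃ nn : ℕ, 0 < nn ∧ (σ ^ nn) t0 = t0 := by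
      refine ⟨orderOf σ, orderOf_pos σ, ?_⟩
      rw [pow_orderOf_eq_one]; rfl
    set n := Nat.find hex with hndef
    obtain ⟨hnpos, hfix⟩ := Nat.find_spec hex
    have hmin : ∀ i, 0 < i → i < n → (σ ^ i) t0 ≠ t0 := fun i hi hin h =>
      Nat.find_min hex hin ⟨hi, h⟩
    have hsucc : ∀ i : ℕ, (σ ^ (i + 1)) t0 = σ ((σ ^ i) t0) := by
      intro i
      rw [pow_succ']
      rfl
    have hdist : ∀ i j, i < j → j < n → (σ ^ i) t0 ≠ (σ ^ j) t0 := by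
      intro i j hij hjn h
      apply hmin (j - i) (by omega) (by omega)
      have heq : (σ ^ i) ((σ ^ (j - i)) t0) = (σ ^ i) t0 := by
        rw [← Equiv.Perm.mul_apply, ← pow_add]
        have : i + (j - i) = j := by omega
        rw [this, ← h]
      exact (σ ^ i).injective heq
    have hmem : ∀ i : ℕ, (σ ^ i) t0 ∈ s := by
      intro i; induction i with
      | zero => simpa using ht0
      | succ i ih =>
        rw [hsucc]
        exact hinv _ ih
    set O := (Finset.range n).image (fun i => (σ ^ i) t0) with hO
    have hOs : O ⊆ s := by
      intro t ht
      obtain ⟨i, _, rfl⟩ := Finset.mem_image.mp ht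
      exact hmem i
    have ht0O : t0 ∈ O :=
      Finset.mem_image.mpr ⟨0, Finset.mem_range.mpr hnpos, by simp⟩
    set s' := s \ O with hs'
    have hs'inv : ∀ t ∈ s', σ t ∈ s' := by
      intro t ht
      rw [hs', Finset.mem_sdiff] at ht ⊢
      obtain ⟨hts, htO⟩ := ht
      refine ⟨hinv t hts, fun hcon => htO ?_⟩
      obtain ⟨i, hi, hieq⟩ := Finset.mem_image.mp hcon
      rw [Finset.mem_range] at hi
      rcases Nat.eq_zero_or_pos i with rfl | hipos
      · have : σ t = σ ((σ ^ (n - 1)) t0) := by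
          rw [← hsucc]
          have : n - 1 + 1 = n := by omega
          rw [this, hfix]
          simpa using hieq.symm
        have := σ.injective this
        exact Finset.mem_image.mpr ⟨n - 1, Finset.mem_range.mpr (by omega), this.symm⟩
      · have : σ t = σ ((σ ^ (i - 1)) t0) := by
          rw [← hsucc]
          have : i - 1 + 1 = i := by omega
          rw [this]
          exact hieq.symm
        have := σ.injective this
        exact Finset.mem_image.mpr ⟨i - 1, Finset.mem_range.mpr (by omega), this.symm⟩
    have hcard' : s'.card ≤ N := by
      have : s' ⊂ s := Finset.sdiff_ssubset hOs ⟨t0, ht0O⟩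
      have := Finset.card_lt_card this
      omega
    set fw : Fin n → V := fun i => p ((σ ^ i.val) t0) with hfw
    have hstepw : ∀ i : Fin n, E' (fw i) (fw ⟨(i.1 + 1) % n, Nat.mod_lt _ hnpos⟩) := by
      intro i
      have hi := i.isLt
      rcases lt_or_ge (i.1 + 1) n with h | h
      · have e : (σ ^ ((i.1 + 1) % n)) t0 = σ ((σ ^ i.1) t0) := by
          rw [Nat.mod_eq_of_lt h, hsucc]
        show E' (p ((σ ^ i.1) t0)) (p ((σ ^ ((i.1 + 1) % n)) t0))
        rw [e]
        exact hstep _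
      · have hi1 : i.1 + 1 = n := by omega
        have e : (σ ^ ((i.1 + 1) % n)) t0 = σ ((σ ^ i.1) t0) := by
          rw [hi1, Nat.mod_self, pow_zero, Equiv.Perm.one_apply, ← hsucc, hi1, hfix]
        show E' (p ((σ ^ i.1) t0)) (p ((σ ^ ((i.1 + 1) % n)) t0))
        rw [e]
        exact hstep _
    obtain ⟨cycs1, hcyc1, hcount1⟩ := walk_decomp E' n fw hnpos hstepw
    obtain ⟨cycs2, hcyc2, hcount2⟩ := IHN s' hcard' hs'inv
    refine ⟨cycs1 ++ cycs2, ?_, ?_⟩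
    · intro l hl
      rcases List.mem_append.mp hl with h | h
      · exact hcyc1 l h
      · exact hcyc2 l h
    · intro v
      have hsplit : (∑ t ∈ s, if p t = v then (1:ℕ) else 0)
          = (∑ t ∈ O, if p t = v then (1:ℕ) else 0)
            + (∑ t ∈ s', if p t = v then (1:ℕ) else 0) := by
        rw [hs', add_comm]
        exact (Finset.sum_sdiff hOs).symm
      have hOsum : (∑ t ∈ O, if p t = v then (1:ℕ) else 0)
          = ∑ i : Fin n, if fw i = v then (1:ℕ) else 0 := by
        rw [hO, Finset.sum_image]
        · rw [← Fin.sum_univ_eq_sum_range (fun i => if p ((σ ^ i) t0) = v then (1:ℕ) else 0) n]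
        · intro x hx y hy hxy
          rw [Finset.mem_coe, Finset.mem_range] at hx hy
          by_contra hne
          rcases lt_or_gt_of_ne hne with h | h
          · exact hdist x y h hy hxy
          · exact hdist y x h hx hxy.symm
      rw [hsplit, hOsum, hcount1 v, hcount2 v, List.map_append, List.sum_append]


/-- The 0/1 adjacency matrix of the directed cycle with vertex list `l`. -/
def cycleAdj {m : ℕ} (l : List (Fin m)) : Matrix (Fin m) (Fin m) ℝ :=
  Matrix.of fun a b =>
    if ∃ i : Fin l.length,
        l.get i = a ∧ l.get ⟨(i.1 + 1) % l.length, Nat.mod_lt _ i.pos⟩ = b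
    then 1 else 0

/-- The node-cycle incidence vector of the cycle with vertex list `l`. -/
def cycleVec {m : ℕ} (l : List (Fin m)) : Fin m → ℝ :=
  fun i => if i ∈ l then 1 else 0


lemma cycleAdj_apply {m : ℕ} (l : List (Fin m)) (a b : Fin m) :
    cycleAdj l a b =
      if ∃ i : Fin l.length,
          l.get i = a ∧ l.get ⟨(i.1 + 1) % l.length, Nat.mod_lt _ i.pos⟩ = b
      then 1 else 0 := rfl

lemma adj_row_sum {m : ℕ} {l : List (Fin m)} (hl : l.Nodup) (a : Fin m) :
    ∑ b : Fin m, cycleAdj l a b = cycleVec l a := by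
  classical
  have hget := List.nodup_iff_injective_get.mp hl
  by_cases hmem : a ∈ l
  · obtain ⟨i0, hi0⟩ := List.mem_iff_get.mp hmem
    rw [show cycleVec l a = 1 from if_pos hmem]
    rw [Finset.sum_eq_single (l.get ⟨(i0.1 + 1) % l.length, Nat.mod_lt _ i0.pos⟩)]
    · exact if_pos ⟨i0, hi0, rfl⟩
    · intro b _ hb
      rw [cycleAdj_apply, if_neg]
      rintro ⟨i, hia, hib⟩
      have : i = i0 := hget (hia.trans hi0.symm)
      subst this
      exact hb hib.symm
    · intro h
      exact absurd (Finset.mem_univ _) h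
  · rw [show cycleVec l a = 0 from if_neg hmem]
    apply Finset.sum_eq_zero
    intro b _
    rw [cycleAdj_apply, if_neg]
    rintro ⟨i, hia, -⟩
    exact hmem (hia ▸ List.get_mem l i)

lemma adj_col_sum {m : ℕ} {l : List (Fin m)} (hl : l.Nodup) (b : Fin m) :
    ∑ a : Fin m, cycleAdj l a b = cycleVec l b := by
  classical
  have hget := List.nodup_iff_injective_get.mp hl
  by_cases hmem : b ∈ l
  · obtain ⟨j, hj⟩ := List.mem_iff_get.mp hmem
    have hL : 0 < l.length := j.pos
    set i0 : Fin l.length := ⟨(j.1 + l.length - 1) % l.length, Nat.mod_lt _ hL⟩ with hi0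
    have hi0succ : (i0.1 + 1) % l.length = j.1 := by
      show ((j.1 + l.length - 1) % l.length + 1) % l.length = j.1
      rw [Nat.mod_add_mod]
      have he : j.1 + l.length - 1 + 1 = j.1 + l.length := by omega
      rw [he, Nat.add_mod_right]
      exact Nat.mod_eq_of_lt j.isLt
    rw [show cycleVec l b = 1 from if_pos hmem]
    rw [Finset.sum_eq_single (l.get i0)]
    · refine if_pos ⟨i0, rfl, ?_⟩
      rw [← hj]
      exact congrArg l.get (Fin.ext hi0succ)
    · intro a _ ha
      rw [cycleAdj_apply, if_neg]
      rintro ⟨i, hia, hib⟩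
      have h1 : (⟨(i.1 + 1) % l.length, Nat.mod_lt _ i.pos⟩ : Fin l.length) = j :=
        hget (hib.trans hj.symm)
      have h1v : (i.1 + 1) % l.length = j.1 := congrArg Fin.val h1
      have h2 : i = i0 := by
        apply Fin.ext
        show i.1 = (j.1 + l.length - 1) % l.length
        have hi := i.isLt
        rcases lt_or_ge (i.1 + 1) l.length with h | h
        · rw [Nat.mod_eq_of_lt h] at h1v
          rw [← h1v]
          have he : i.1 + 1 + l.length - 1 = i.1 + l.length := by omega
          rw [he, Nat.add_mod_right, Nat.mod_eq_of_lt hi]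
        · have hlen : i.1 + 1 = l.length := by omega
          rw [hlen, Nat.mod_self] at h1v
          rw [← h1v]
          rw [Nat.mod_eq_of_lt (by omega)]
          omega
      subst h2
      exact ha hia.symm
    · intro h
      exact absurd (Finset.mem_univ _) h
  · rw [show cycleVec l b = 0 from if_neg hmem]
    apply Finset.sum_eq_zero
    intro a _
    rw [cycleAdj_apply, if_neg]
    rintro ⟨i, -, hib⟩
    exact hmem (hib ▸ List.get_mem l _)

lemma mem_iff_adj {m : ℕ} (l : List (Fin m)) (a : Fin m) :
    a ∈ l ↔ ∃ b, cycleAdj l a b = 1 := by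
  classical
  constructor
  · intro h
    obtain ⟨i, hi⟩ := List.mem_iff_get.mp h
    exact ⟨l.get ⟨(i.1 + 1) % l.length, Nat.mod_lt _ i.pos⟩, if_pos ⟨i, hi, rfl⟩⟩
  · rintro ⟨b, hb⟩
    by_cases hcond : ∃ i : Fin l.length,
        l.get i = a ∧ l.get ⟨(i.1 + 1) % l.length, Nat.mod_lt _ i.pos⟩ = b
    · obtain ⟨i, hia, -⟩ := hcond
      exact hia ▸ List.get_mem l _
    · rw [cycleAdj_apply, if_neg hcond] at hb
      norm_num at hb

lemma cycleVec_eq_of_adj_eq {m : ℕ} {l1 l2 : List (Fin m)}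
    (h : cycleAdj l1 = cycleAdj l2) : cycleVec l1 = cycleVec l2 := by
  funext a
  have hm : a ∈ l1 ↔ a ∈ l2 := by
    rw [mem_iff_adj, mem_iff_adj, h]
  unfold cycleVec
  by_cases h1 : a ∈ l1
  · rw [if_pos h1, if_pos (hm.mp h1)]
  · rw [if_neg h1, if_neg (fun h2 => h1 (hm.mpr h2))]

lemma cast_count_sum {α : Type*} [DecidableEq α] (cl : List (List α)) (v : α) :
    (((cl.map (fun l => l.count v)).sum : ℕ) : ℝ)
      = (cl.map (fun l => ((l.count v : ℕ) : ℝ))).sum := by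
  induction cl with
  | nil => simp
  | cons a l ih => simp [ih]


/-- If an integer vector `y` lies in the convex cone generated (with nonnegative real
coefficients) by the node-cycle incidence vectors of the cycles `C 1, …, C k` of `S`, then
`y` is a nonnegative *integer* combination of those vectors. -/
theorem integer_point_integer_combination {m k : ℕ} (E : Fin m → Fin m → Prop)
    (C : Fin k → List (Fin m))
    (hC : ∀ j, IsDiCycle E (C j))
    (hall : ∀ l, IsDiCycle E l → ∃ j, cycleAdj (C j) = cycleAdj l)
    (y : Fin m → ℕ) (c : Fin k → ℝ) (hc : ∀ j, 0 ≤ c j)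
    (hy : ∀ i, (y i : ℝ) = ∑ j, c j * cycleVec (C j) i) :
    ∃ d : Fin k → ℕ, ∀ i, (y i : ℝ) = ∑ j, (d j : ℝ) * cycleVec (C j) i := by
  classical
  set X : Fin m → Fin m → ℝ := fun a b => ∑ j, c j * cycleAdj (C j) a b with hX
  have hXnn : ∀ a b, 0 ≤ X a b := by
    intro a b
    apply Finset.sum_nonneg
    intro j _
    apply mul_nonneg (hc j)
    rw [cycleAdj_apply]
    split <;> norm_num
  have hrow : ∀ a, ∑ b, X a b = (y a : ℝ) := by
    intro a
    rw [Finset.sum_comm]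
    rw [Finset.sum_congr rfl (fun j (_ : j ∈ Finset.univ) => by
      rw [← Finset.mul_sum, adj_row_sum (hC j).2.1 a] :
        ∀ j ∈ Finset.univ, ∑ b, c j * cycleAdj (C j) a b = c j * cycleVec (C j) a)]
    exact (hy a).symm
  have hcol : ∀ b, ∑ a, X a b = (y b : ℝ) := by
    intro b
    rw [Finset.sum_comm]
    rw [Finset.sum_congr rfl (fun j (_ : j ∈ Finset.univ) => by
      rw [← Finset.mul_sum, adj_col_sum (hC j).2.1 b] :
        ∀ j ∈ Finset.univ, ∑ a, c j * cycleAdj (C j) a b = c j * cycleVec (C j) b)]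
    exact (hy b).symm
  have hedge : ∀ a b, 0 < X a b → E a b := by
    intro a b h
    by_contra hE
    have hzero : X a b = 0 := by
      apply Finset.sum_eq_zero
      intro j _
      by_cases hcond : ∃ i : Fin (C j).length,
          (C j).get i = a ∧ (C j).get ⟨(i.1 + 1) % (C j).length, Nat.mod_lt _ i.pos⟩ = b
      · obtain ⟨i, hia, hib⟩ := hcond
        exact absurd (hia ▸ hib ▸ (hC j).2.2 i) hE
      · rw [cycleAdj_apply, if_neg hcond, mul_zero]
    rw [hzero] at h
    exact lt_irrefl _ h
  -- blow-up
  set T := Σ i : Fin m, Fin (y i) with hT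
  set t : T → Finset T := fun x => Finset.univ.filter (fun z => 0 < X x.1 z.1) with ht
  have hHall : ∀ A : Finset T, A.card ≤ (A.biUnion t).card := by
    intro A
    set P := A.image (Sigma.fst) with hP
    set Nf := P.biUnion (fun i => Finset.univ.filter (fun j => 0 < X i j)) with hNf
    have hbU : A.biUnion t = Finset.univ.filter (fun z : T => z.1 ∈ Nf) := by
      ext z
      simp only [Finset.mem_biUnion, ht, Finset.mem_filter, Finset.mem_univ, true_and,
        hNf, hP, Finset.mem_image]
      constructor
      · rintro ⟨x, hxA, hx⟩
        exact ⟨x.1, ⟨x, hxA, rfl⟩, hx⟩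
      · rintro ⟨i, ⟨x, hxA, rfl⟩, hx⟩
        exact ⟨x, hxA, hx⟩
    have hcard1 : A.card ≤ ∑ i ∈ P, y i := by
      have hsub : A ⊆ P.sigma (fun _ => Finset.univ) := by
        intro x hx
        rw [Finset.mem_sigma]
        exact ⟨Finset.mem_image_of_mem _ hx, Finset.mem_univ _⟩
      calc A.card ≤ (P.sigma (fun _ => Finset.univ)).card := Finset.card_le_card hsub
        _ = ∑ i ∈ P, y i := by rw [Finset.card_sigma]; simp
    have hcard2 : (Finset.univ.filter (fun z : T => z.1 ∈ Nf)).card = ∑ j ∈ Nf, y j := by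
      have he : Finset.univ.filter (fun z : T => z.1 ∈ Nf)
          = Nf.sigma (fun _ => Finset.univ) := by
        ext z
        obtain ⟨z1, z2⟩ := z
        rw [Finset.mem_sigma]
        simp
      rw [he, Finset.card_sigma]
      simp
    have hreal : (∑ i ∈ P, (y i : ℝ)) ≤ ∑ j ∈ Nf, (y j : ℝ) := by
      have e1 : ∀ i ∈ P, (y i : ℝ) = ∑ j ∈ Nf, X i j := by
        intro i hi
        rw [← hrow i]
        refine (Finset.sum_subset (Finset.subset_univ Nf) ?_).symm
        intro j _ hj
        by_contra hne
        have hpos : 0 < X i j := lt_of_le_of_ne (hXnn i j) (Ne.symm hne)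
        exact hj (Finset.mem_biUnion.mpr ⟨i, hi,
          Finset.mem_filter.mpr ⟨Finset.mem_univ _, hpos⟩⟩)
      rw [Finset.sum_congr rfl e1, Finset.sum_comm]
      apply Finset.sum_le_sum
      intro j _
      rw [← hcol j]
      apply Finset.sum_le_sum_of_subset_of_nonneg (Finset.subset_univ P)
      intro i _ _
      exact hXnn i j
    have hnat : (∑ i ∈ P, y i) ≤ ∑ j ∈ Nf, y j := by
      have := hreal
      push_cast at this
      exact_mod_cast this
    rw [hbU, hcard2]
    omega
  obtain ⟨fT, hfinj, hfmem⟩ := (Finset.all_card_le_biUnion_card_iff_exists_injective t).mp hHall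
  have hfbij : Function.Bijective fT := Finite.injective_iff_bijective.mp hfinj
  set σ : Equiv.Perm T := Equiv.ofBijective fT hfbij with hσ
  set E' : Fin m → Fin m → Prop := fun a b => 0 < X a b with hE'
  have hstepσ : ∀ x : T, E' (x.1) ((σ x).1) := by
    intro x
    have := hfmem x
    rw [ht, Finset.mem_filter] at this
    exact this.2
  obtain ⟨cycs, hcycs, hcount⟩ := perm_decomp E' σ Sigma.fst hstepσ
    (Finset.univ.card) Finset.univ le_rfl (by simp)
  have hyv : ∀ v, y v = (cycs.map (fun l => l.count v)).sum := by
    intro v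
    rw [← hcount v]
    rw [← Finset.univ_sigma_univ, Finset.sum_sigma]
    have hin : ∀ i : Fin m, (∑ s : Fin (y i), if (⟨i, s⟩ : T).1 = v then 1 else 0)
        = if i = v then y i else 0 := by
      intro i
      show (∑ _s : Fin (y i), if i = v then (1:ℕ) else 0) = _
      rw [Finset.sum_const, Finset.card_univ, Fintype.card_fin, smul_eq_mul]
      by_cases h : i = v <;> simp [h]
    rw [Finset.sum_congr rfl (fun i _ => hin i), Finset.sum_ite_eq' Finset.univ v y]
    simp
  have hEcyc : ∀ l ∈ cycs, IsDiCycle E l := by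
    intro l hl
    obtain ⟨h1, h2, h3⟩ := hcycs l hl
    exact ⟨h1, h2, fun i => hedge _ _ (h3 i)⟩
  by_cases hnil : cycs = []
  · refine ⟨fun _ => 0, ?_⟩
    intro v
    have h0 := hyv v
    rw [hnil] at h0
    simp only [List.map_nil, List.sum_nil] at h0
    simp [h0]
  · obtain ⟨l0, hl0⟩ := List.exists_mem_of_ne_nil cycs hnil
    have hne : Nonempty (Fin k) := ⟨(hall l0 (hEcyc l0 hl0)).choose⟩
    set jf : List (Fin m) → Fin k := fun l =>
      if h : IsDiCycle E l then (hall l h).choose else Classical.arbitrary _ with hjfdef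
    have hjf : ∀ l ∈ cycs, cycleVec (C (jf l)) = cycleVec l := by
      intro l hl
      have hEl := hEcyc l hl
      have he : jf l = (hall l hEl).choose := dif_pos hEl
      rw [he]
      exact cycleVec_eq_of_adj_eq (hall l hEl).choose_spec
    set J : List (Fin k) := cycs.map jf with hJ
    refine ⟨fun j => J.count j, ?_⟩
    intro v
    show (y v : ℝ) = ∑ j, (J.count j : ℝ) * cycleVec (C j) v
    have key : ∑ j, ((J.count j : ℝ) * cycleVec (C j) v)
        = (J.map (fun j => cycleVec (C j) v)).sum := by
      rw [Finset.sum_list_map_count]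
      rw [← Finset.sum_subset (Finset.subset_univ J.toFinset) (fun j _ hj => by
        rw [List.count_eq_zero_of_not_mem (fun hc => hj (List.mem_toFinset.mpr hc))]
        simp)]
      apply Finset.sum_congr rfl
      intro j _
      rw [nsmul_eq_mul]
    have key2 : (J.map (fun j => cycleVec (C j) v)).sum
        = ((cycs.map (fun l => l.count v)).sum : ℝ) := by
      rw [hJ, List.map_map]
      have he : ∀ l ∈ cycs, ((fun j => cycleVec (C j) v) ∘ jf) l = ((l.count v : ℕ) : ℝ) := by
        intro l hl
        show cycleVec (C (jf l)) v = ((l.count v : ℕ) : ℝ)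
        rw [congrFun (hjf l hl) v]
        unfold cycleVec
        by_cases hmem : v ∈ l
        · rw [if_pos hmem, List.count_eq_one_of_mem (hcycs l hl).2.1 hmem]
          norm_num
        · rw [if_neg hmem, List.count_eq_zero_of_not_mem hmem]
          norm_num
      rw [List.map_congr_left he, ← cast_count_sum]
    rw [key, key2, ← cast_count_sum]
    exact_mod_cast hyv v
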